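/- The number of primitive circular words (necklaces) of length n on the alphabet {1,...,a} in which letter i appears exactly r_i times (with r_1+...+r_a = n, n ≥ 1) equals (1/n) · Σ_{d | gcd(n, r_1, ..., r_a)} μ(d) · (n/d)! / ((r_1/d)! ··· (r_a/d)!), where μ is the Möbius function. -/

import Mathlib

/-- Cyclic rotation of a word `w : Fin n → Fin a` by `d` places. -/
def rot (n a : ℕ) (w : Fin n → Fin a) (d : Fin n) : Fin n → Fin a := fun i => w (i + d)

/-- Two words are equivalent iff one is a cyclic rotation of the other; a necklace
is an equivalence class. -/
def rotSetoid (n a : ℕ) [NeZero n] : Setoid (Fin n → Fin a) where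
  r w w' := ∃ d, rot n a w d = w'
  iseqv := by
    refine ⟨fun w => ⟨0, funext fun i => ?_⟩, ?_, ?_⟩
    · simp [rot]
    · rintro w w' ⟨d, rfl⟩
      exact ⟨-d, funext fun i => congrArg w (by abel)⟩
    · rintro w w' w'' ⟨d, rfl⟩ ⟨d', rfl⟩
      exact ⟨d + d', funext fun i => congrArg w (by abel)⟩

/-- A word is primitive (aperiodic) if it is not equal to any of its nontrivial
cyclic rotations. -/
def Primitive (n a : ℕ) [NeZero n] (w : Fin n → Fin a) : Prop :=
  ∀ d : Fin n, d ≠ 0 → rot n a w d ≠ w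

/-- The number of occurrences of the letter `c` in the word `w`. -/
def content (n a : ℕ) (w : Fin n → Fin a) (c : Fin a) : ℕ :=
  (Finset.univ.filter fun i => w i = c).card

namespace Neck

attribute [local instance] Classical.propDecidable

variable {a : ℕ}

def IsPer (f : ℕ → Fin a) (t : ℕ) : Prop := ∀ i, f (i + t) = f i

def nw {N : ℕ} [NeZero N] (w : Fin N → Fin a) : ℕ → Fin a :=
  fun i => w ⟨i % N, Nat.mod_lt _ (Nat.pos_of_ne_zero (NeZero.ne N))⟩

lemma nw_apply {N : ℕ} [NeZero N] (w : Fin N → Fin a) (i : Fin N) : nw w i.val = w i := by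
  simp only [nw]
  congr 1
  exact Fin.ext (Nat.mod_eq_of_lt i.isLt)

lemma nw_inj {N : ℕ} [NeZero N] {w w' : Fin N → Fin a} (h : nw w = nw w') : w = w' := by
  funext i
  rw [← nw_apply w i, ← nw_apply w' i, h]

lemma isPer_N {N : ℕ} [NeZero N] (w : Fin N → Fin a) : IsPer (nw w) N := by
  intro i; simp only [nw, Nat.add_mod_right]

lemma IsPer.add {f : ℕ → Fin a} {t t' : ℕ} (h : IsPer f t) (h' : IsPer f t') :
    IsPer f (t + t') := by
  intro i; rw [← Nat.add_assoc, h' (i + t), h i]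

lemma IsPer.mul {f : ℕ → Fin a} {t : ℕ} (h : IsPer f t) (k : ℕ) : IsPer f (k * t) := by
  induction k with
  | zero => intro i; simp
  | succ k ih => intro i; rw [Nat.succ_mul, ← Nat.add_assoc, h (i + k * t), ih i]

lemma IsPer.sub {f : ℕ → Fin a} {t t' : ℕ} (h : IsPer f t) (h' : IsPer f t') (hle : t ≤ t') :
    IsPer f (t' - t) := by
  intro i
  have : i + (t' - t) + t = i + t' := by omega
  rw [← h (i + (t' - t)), this, h' i]

lemma IsPer.mod {f : ℕ → Fin a} {t t' : ℕ} (h : IsPer f t) (h' : IsPer f t') :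
    IsPer f (t' % t) := by
  have h1 : IsPer f (t' / t * t) := h.mul _
  have h2 : t' / t * t ≤ t' := Nat.div_mul_le_self t' t
  have hq : t' % t + t' / t * t = t' := by rw [mul_comm]; exact Nat.mod_add_div t' t
  have h3 : t' % t = t' - t' / t * t := by omega
  rw [h3]
  exact h1.sub h' h2

lemma exP {N : ℕ} [NeZero N] (w : Fin N → Fin a) : ∃ t, 0 < t ∧ IsPer (nw w) t :=
  ⟨N, Nat.pos_of_ne_zero (NeZero.ne N), isPer_N w⟩

noncomputable def minP {N : ℕ} [NeZero N] (w : Fin N → Fin a) : ℕ := Nat.find (exP w)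

lemma minP_pos {N : ℕ} [NeZero N] (w : Fin N → Fin a) : 0 < minP w := (Nat.find_spec (exP w)).1

lemma minP_isPer {N : ℕ} [NeZero N] (w : Fin N → Fin a) : IsPer (nw w) (minP w) :=
  (Nat.find_spec (exP w)).2

lemma minP_min {N : ℕ} [NeZero N] (w : Fin N → Fin a) {t : ℕ} (ht : 0 < t)
    (h : IsPer (nw w) t) : minP w ≤ t := Nat.find_le ⟨ht, h⟩

lemma minP_dvd {N : ℕ} [NeZero N] {w : Fin N → Fin a} {t : ℕ} (h : IsPer (nw w) t) :
    minP w ∣ t := by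
  by_contra hc
  have hmod : t % minP w ≠ 0 := fun h0 => hc (Nat.dvd_of_mod_eq_zero h0)
  have hper : IsPer (nw w) (t % minP w) := (minP_isPer w).mod h
  have hlt : t % minP w < minP w := Nat.mod_lt _ (minP_pos w)
  exact absurd (minP_min w (Nat.pos_of_ne_zero hmod) hper) (by omega)

lemma minP_dvd_N {N : ℕ} [NeZero N] (w : Fin N → Fin a) : minP w ∣ N := minP_dvd (isPer_N w)

lemma minP_eq_of_nw_eq {N M : ℕ} [NeZero N] [NeZero M] {w : Fin N → Fin a} {w' : Fin M → Fin a}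
    (h : nw w = nw w') : minP w = minP w' := by
  refine Nat.dvd_antisymm (minP_dvd ?_) (minP_dvd ?_)
  · rw [h]; exact minP_isPer w'
  · rw [← h]; exact minP_isPer w

lemma rot_eq_iff {N : ℕ} [NeZero N] {w : Fin N → Fin a} {d : Fin N} :
    rot N a w d = w ↔ IsPer (nw w) d.val := by
  have hN : 0 < N := Nat.pos_of_ne_zero (NeZero.ne N)
  constructor
  · intro h j
    have hc : w (⟨j % N, Nat.mod_lt _ hN⟩ + d) = w ⟨j % N, Nat.mod_lt _ hN⟩ := congrFun h _
    have hval : ((⟨j % N, Nat.mod_lt _ hN⟩ : Fin N) + d).val = (j + d.val) % N := by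
      simp [Fin.add_def, Nat.add_mod]
    calc nw w (j + d.val) = w ⟨(j + d.val) % N, Nat.mod_lt _ hN⟩ := rfl
      _ = w (⟨j % N, Nat.mod_lt _ hN⟩ + d) := congrArg w (Fin.ext hval.symm)
      _ = w ⟨j % N, Nat.mod_lt _ hN⟩ := hc
      _ = nw w j := rfl
  · intro h
    funext i
    have h1 : nw w (i.val + d.val) = nw w i.val := h i.val
    rw [nw_apply] at h1
    have h2 : (i + d).val = (i.val + d.val) % N := by simp [Fin.add_def]
    calc rot N a w d i = w (i + d) := rfl
      _ = nw w ((i + d).val) := (nw_apply w _).symm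
      _ = nw w (i.val + d.val) := by
          simp only [nw, h2]
          congr 1
          exact Fin.ext (Nat.mod_mod_of_dvd _ dvd_rfl)
      _ = w i := h1

lemma primitive_iff {N : ℕ} [NeZero N] {w : Fin N → Fin a} :
    Primitive N a w ↔ minP w = N := by
  have hN : 0 < N := Nat.pos_of_ne_zero (NeZero.ne N)
  constructor
  · intro h
    have hle : minP w ≤ N := Nat.le_of_dvd hN (minP_dvd_N w)
    rcases Nat.lt_or_ge (minP w) N with hlt | hge
    · exfalso
      have hd : (⟨minP w, hlt⟩ : Fin N) ≠ 0 := by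
        intro h0
        have := congrArg Fin.val h0
        simp at this
        have := minP_pos w
        omega
      exact h ⟨minP w, hlt⟩ hd (rot_eq_iff.mpr (minP_isPer w))
    · omega
  · intro h d hd hrot
    have hper := rot_eq_iff.mp hrot
    have := minP_dvd hper
    rw [h] at this
    have : d.val = 0 := by
      rcases Nat.eq_zero_or_pos d.val with h0 | hp
      · exact h0
      · exact absurd (Nat.le_of_dvd hp this) (by omega)
    exact hd (Fin.ext this)

section ExtRes

variable {p N : ℕ} [NeZero p] [NeZero N]

def extW (u : Fin p → Fin a) : Fin N → Fin a :=
  fun i => u ⟨i.val % p, Nat.mod_lt _ (Nat.pos_of_ne_zero (NeZero.ne p))⟩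

lemma nw_extW (hpN : p ∣ N) (u : Fin p → Fin a) :
    nw (extW u : Fin N → Fin a) = nw u := by
  funext i
  simp only [nw, extW]
  congr 1
  exact Fin.ext (Nat.mod_mod_of_dvd i hpN)

def resW (h : p ∣ N) (w : Fin N → Fin a) : Fin p → Fin a :=
  fun j => w ⟨j.val, lt_of_lt_of_le j.isLt (Nat.le_of_dvd (Nat.pos_of_ne_zero (NeZero.ne N)) h)⟩

lemma nw_resW (hpN : p ∣ N) (w : Fin N → Fin a) (hper : IsPer (nw w) p) :
    nw (resW hpN w) = nw w := by
  funext j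
  have hp : 0 < p := Nat.pos_of_ne_zero (NeZero.ne p)
  have hle : p ≤ N := Nat.le_of_dvd (Nat.pos_of_ne_zero (NeZero.ne N)) hpN
  have h1 : nw (resW hpN w) j = nw w (j % p) := by
    simp only [nw, resW]
    congr 1
    exact Fin.ext (Nat.mod_eq_of_lt (lt_of_lt_of_le (Nat.mod_lt _ hp) hle)).symm
  rw [h1]
  have h3 : nw w (j % p + j / p * p) = nw w (j % p) := hper.mul (j / p) _
  have h4 : j % p + j / p * p = j := by
    rw [mul_comm]
    exact Nat.mod_add_div j p
  rw [h4] at h3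
  exact h3.symm

lemma extW_resW (hpN : p ∣ N) (w : Fin N → Fin a) (hper : IsPer (nw w) p) :
    (extW (resW hpN w) : Fin N → Fin a) = w :=
  nw_inj (by rw [nw_extW hpN, nw_resW hpN w hper])

lemma resW_extW (hpN : p ∣ N) (u : Fin p → Fin a) :
    resW hpN (extW u : Fin N → Fin a) = u := by
  funext j
  simp only [resW, extW]
  congr 1
  exact Fin.ext (Nat.mod_eq_of_lt j.isLt)

lemma card_mod_fiber (hpN : p ∣ N) (j : Fin p) :
    (Finset.univ.filter fun i : Fin N => i.val % p = j.val).card = N / p := by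
  have hp : 0 < p := Nat.pos_of_ne_zero (NeZero.ne p)
  have hN : 0 < N := Nat.pos_of_ne_zero (NeZero.ne N)
  have hNp : p * (N / p) = N := Nat.mul_div_cancel' hpN
  have h : (Finset.univ.filter fun i : Fin N => i.val % p = j.val).card
      = (Finset.univ : Finset (Fin (N / p))).card := by
    apply Finset.card_nbij'
      (i := fun i => (⟨i.val / p, Nat.div_lt_div_of_lt_of_dvd hpN i.isLt⟩ : Fin (N / p)))
      (j := fun q => (⟨j.val + q.val * p, by nlinarith [q.isLt, j.isLt]⟩ : Fin N))
    · intro i _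
      exact Finset.mem_univ _
    · intro q _
      simp only [Finset.mem_filter, Finset.mem_univ, true_and]
      simp [Nat.add_mul_mod_self_right, Nat.mod_eq_of_lt j.isLt]
    · intro i hi
      simp only [Finset.mem_coe, Finset.mem_filter, Finset.mem_univ, true_and] at hi
      apply Fin.ext
      show j.val + i.val / p * p = i.val
      rw [← hi]
      have h1 := Nat.mod_add_div i.val p
      have h2 : i.val / p * p = p * (i.val / p) := mul_comm _ _
      omega
    · intro q _
      apply Fin.ext
      show (j.val + q.val * p) / p = q.val
      rw [Nat.add_mul_div_right _ _ hp, Nat.div_eq_of_lt j.isLt, Nat.zero_add]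
  rw [h, Finset.card_univ, Fintype.card_fin]

lemma content_extW (hpN : p ∣ N) (u : Fin p → Fin a) (c : Fin a) :
    content N a (extW u) c = (N / p) * content p a u c := by
  have hp : 0 < p := Nat.pos_of_ne_zero (NeZero.ne p)
  rw [content]
  rw [Finset.card_eq_sum_card_fiberwise
    (f := fun i : Fin N => (⟨i.val % p, Nat.mod_lt _ hp⟩ : Fin p))
    (t := Finset.univ.filter fun j => u j = c)
    (by intro x hx
        simp only [Finset.mem_coe, Finset.mem_filter] at hx ⊢
        exact ⟨Finset.mem_univ _, hx.2⟩)]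
  have key : ∀ j ∈ Finset.univ.filter fun j => u j = c,
      ((Finset.univ.filter fun i : Fin N => extW u i = c).filter
        (fun i => (⟨i.val % p, Nat.mod_lt _ hp⟩ : Fin p) = j)).card = N / p := by
    intro j hj
    simp only [Finset.mem_filter] at hj
    rw [show ((Finset.univ.filter fun i : Fin N => extW u i = c).filter
        (fun i => (⟨i.val % p, Nat.mod_lt _ hp⟩ : Fin p) = j))
        = Finset.univ.filter fun i : Fin N => i.val % p = j.val from ?_]
    · exact card_mod_fiber hpN j
    · ext i
      simp only [Finset.mem_filter, Finset.mem_univ, true_and]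
      constructor
      · rintro ⟨-, h2⟩
        rw [Fin.ext_iff] at h2
        exact h2
      · intro h
        have hji : (⟨i.val % p, Nat.mod_lt _ hp⟩ : Fin p) = j := Fin.ext h
        refine ⟨?_, hji⟩
        show u ⟨i.val % p, Nat.mod_lt _ hp⟩ = c
        rw [hji]
        exact hj.2
  rw [Finset.sum_congr rfl key, Finset.sum_const, smul_eq_mul, content, mul_comm]

end ExtRes

section Rot

variable {N : ℕ} [NeZero N]

omit [NeZero N] in
lemma content_comp_equiv (σ : Fin N ≃ Fin N) (w : Fin N → Fin a) (c : Fin a) :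
    content N a (w ∘ σ) c = content N a w c := by
  rw [content, content]
  apply Finset.card_bij' (fun i _ => σ i) (fun i _ => σ.symm i)
  · intro i hi
    simp only [Finset.mem_filter, Function.comp_apply] at hi ⊢
    exact ⟨Finset.mem_univ _, hi.2⟩
  · intro i hi
    simp only [Finset.mem_filter, Function.comp_apply] at hi ⊢
    refine ⟨Finset.mem_univ _, ?_⟩
    simpa using hi.2
  · intro i _; simp
  · intro i _; simp

lemma content_rot (w : Fin N → Fin a) (d : Fin N) (c : Fin a) :
    content N a (rot N a w d) c = content N a w c :=
  content_comp_equiv (Equiv.addRight d) w c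

lemma rot_rot (w : Fin N → Fin a) (d d' : Fin N) :
    rot N a (rot N a w d) d' = rot N a w (d + d') := by
  funext i
  show w ((i + d') + d) = w (i + (d + d'))
  rw [add_assoc, add_comm d' d]

lemma rot_zero (w : Fin N → Fin a) : rot N a w 0 = w := by
  funext i; show w (i + 0) = w i; rw [add_zero]

lemma primitive_rot {w : Fin N → Fin a} (h : Primitive N a w) (d : Fin N) :
    Primitive N a (rot N a w d) := by
  intro t ht heq
  rw [rot_rot] at heq
  have h2 : rot N a (rot N a w (d + t)) (-d) = rot N a (rot N a w d) (-d) := by rw [heq]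
  rw [rot_rot, rot_rot] at h2
  have e1 : d + t + -d = t := by abel
  have e2 : d + -d = (0 : Fin N) := by abel
  rw [e1, e2, rot_zero] at h2
  exact h t ht h2

end Rot

section Multinomial

variable {N : ℕ}

def sigmaFst {β : Fin a → Type*} (c : Fin a) : {x : Σ c', β c' // x.1 = c} ≃ β c where
  toFun x := (congrArg β x.2) ▸ x.1.2
  invFun y := ⟨⟨c, y⟩, rfl⟩
  left_inv := by rintro ⟨⟨c', y⟩, rfl⟩; rfl
  right_inv := by intro y; rfl

lemma content_eq_card_subtype (w : Fin N → Fin a) (c : Fin a) :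
    content N a w c = Fintype.card {i // w i = c} := by
  rw [content, Fintype.card_subtype]

lemma card_content_mul (s : Fin a → ℕ) (hs : ∑ c, s c = N) :
    (Finset.univ.filter fun w : Fin N → Fin a => ∀ c, content N a w c = s c).card
      * ∏ c, (s c).factorial = N.factorial := by
  have hcard : Fintype.card (Fin N) = Fintype.card (Σ c, Fin (s c)) := by
    simp [Fintype.card_sigma, hs]
  let e : Fin N ≃ Σ c, Fin (s c) := Fintype.equivOfCardEq hcard
  set w₀ : Fin N → Fin a := fun i => (e i).1 with hw₀def
  have hw₀ : ∀ c, content N a w₀ c = s c := by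
    intro c
    rw [content_eq_card_subtype]
    have e1 : {i // w₀ i = c} ≃ {x : Σ c', Fin (s c') // x.1 = c} :=
      Equiv.subtypeEquiv e (fun i => Iff.rfl)
    rw [Fintype.card_congr (e1.trans (sigmaFst c)), Fintype.card_fin]
  set F := Finset.univ.filter fun w : Fin N → Fin a => ∀ c, content N a w c = s c with hF
  have hmem : ∀ σ ∈ (Finset.univ : Finset (Equiv.Perm (Fin N))), w₀ ∘ ⇑σ ∈ F := by
    intro σ _
    rw [hF, Finset.mem_filter]
    exact ⟨Finset.mem_univ _, fun c => by rw [content_comp_equiv σ w₀ c]; exact hw₀ c⟩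
  have hsum := Finset.card_eq_sum_card_fiberwise hmem
  rw [Finset.card_univ, Fintype.card_perm, Fintype.card_fin] at hsum
  have hfib : ∀ w ∈ F, (Finset.univ.filter fun σ : Equiv.Perm (Fin N) => w₀ ∘ ⇑σ = w).card
      = ∏ c, (s c).factorial := by
    intro w hw
    rw [hF, Finset.mem_filter] at hw
    have φ : ∀ c, {i // w i = c} ≃ {i // w₀ i = c} := fun c =>
      Fintype.equivOfCardEq (by
        rw [← content_eq_card_subtype, ← content_eq_card_subtype, hw.2 c, hw₀ c])
    let σ₀ : Fin N ≃ Fin N := Equiv.ofFiberEquiv φ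
    have hσ₀ : ∀ i, w₀ (σ₀ i) = w i := fun i => Equiv.ofFiberEquiv_map φ i
    have hstep : (Finset.univ.filter fun σ : Equiv.Perm (Fin N) => w₀ ∘ ⇑σ = w).card
        = (Finset.univ.filter fun τ : Equiv.Perm (Fin N) => w₀ ∘ ⇑τ = w₀).card := by
      apply Finset.card_nbij' (i := fun σ => σ₀.symm.trans σ) (j := fun τ => σ₀.trans τ)
      · intro σ hσ
        simp only [Finset.mem_coe, Finset.mem_filter, Finset.mem_univ, true_and] at hσ ⊢
        funext x
        show w₀ (σ (σ₀.symm x)) = w₀ x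
        rw [show w₀ (σ (σ₀.symm x)) = w (σ₀.symm x) from congrFun hσ _]
        rw [← hσ₀ (σ₀.symm x), Equiv.apply_symm_apply]
      · intro τ hτ
        simp only [Finset.mem_coe, Finset.mem_filter, Finset.mem_univ, true_and] at hτ ⊢
        funext x
        show w₀ (τ (σ₀ x)) = w x
        rw [show w₀ (τ (σ₀ x)) = w₀ (σ₀ x) from congrFun hτ _, hσ₀]
      · intro σ _
        ext x
        simp
      · intro τ _
        ext x
        simp
    rw [hstep]
    have hstab : (Finset.univ.filter fun τ : Equiv.Perm (Fin N) => w₀ ∘ ⇑τ = w₀).card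
        = Fintype.card {g : Equiv.Perm (Fin N) // w₀ ∘ ⇑g = w₀} := (Fintype.card_subtype _).symm
    rw [hstab, DomMulAct.stabilizer_card w₀]
    apply Finset.prod_congr rfl
    intro c _
    rw [← content_eq_card_subtype, hw₀ c]
  rw [Finset.sum_congr rfl hfib, Finset.sum_const, smul_eq_mul] at hsum
  exact hsum.symm

end Multinomial

section Decomp

noncomputable def Bcard (M : ℕ) (s' : Fin a → ℕ) : ℕ :=
  if h : M = 0 then 0 else
    haveI : NeZero M := ⟨h⟩
    (Finset.univ.filter fun u : Fin M → Fin a =>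
        Primitive M a u ∧ ∀ c, content M a u c = s' c).card

lemma Bcard_eq (M : ℕ) [NeZero M] (s' : Fin a → ℕ) :
    Bcard M s' = (Finset.univ.filter fun u : Fin M → Fin a =>
        Primitive M a u ∧ ∀ c, content M a u c = s' c).card := by
  rw [Bcard, dif_neg (NeZero.ne M)]

lemma content_eq_mul_res {N p : ℕ} [NeZero N] [NeZero p] (hp : p ∣ N) (w : Fin N → Fin a)
    (hper : IsPer (nw w) p) (c : Fin a) :
    content N a w c = (N / p) * content p a (resW hp w) c := by
  conv_lhs => rw [← extW_resW hp w hper]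
  exact content_extW hp _ c

lemma card_decomp (k m : ℕ) [NeZero k] [NeZero m] (s : Fin a → ℕ)
    (hcop : Nat.Coprime k (Finset.univ.gcd s)) :
    haveI : NeZero (m * k) := ⟨Nat.mul_ne_zero (NeZero.ne m) (NeZero.ne k)⟩
    (Finset.univ.filter fun w : Fin (m * k) → Fin a =>
        ∀ c, content (m * k) a w c = m * s c).card
      = ∑ d ∈ m.divisors, Bcard (d * k) (fun c => d * s c) := by
  haveI : NeZero (m * k) := ⟨Nat.mul_ne_zero (NeZero.ne m) (NeZero.ne k)⟩
  have hk : 0 < k := Nat.pos_of_ne_zero (NeZero.ne k)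
  have hm : 0 < m := Nat.pos_of_ne_zero (NeZero.ne m)
  have hN : 0 < m * k := Nat.pos_of_ne_zero (NeZero.ne (m * k))
  set N := m * k with hNdef
  set F := Finset.univ.filter fun w : Fin N → Fin a => ∀ c, content N a w c = m * s c with hFdef
  -- the key divisibility : for w ∈ F, (N / minP w) divides m
  have hediv : ∀ w ∈ F, (N / minP w) ∣ m ∧ minP w = (m / (N / minP w)) * k := by
    intro w hw
    rw [hFdef, Finset.mem_filter] at hw
    set p := minP w with hpdef
    have hppos : 0 < p := minP_pos w
    haveI : NeZero p := ⟨hppos.ne'⟩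
    have hpN : p ∣ N := minP_dvd_N w
    set e := N / p with hedef
    have hepos : 0 < e := Nat.div_pos (Nat.le_of_dvd hN hpN) hppos
    have hep : e * p = N := Nat.div_mul_cancel hpN
    have hcontent : ∀ c, m * s c = e * content p a (resW hpN w) c := by
      intro c
      rw [← hw.2 c]
      exact content_eq_mul_res hpN w (minP_isPer w) c
    have h1 : e ∣ m * k := ⟨p, hep.symm⟩
    have h2 : e ∣ m * Finset.univ.gcd s := by
      have : ∀ c ∈ Finset.univ, e ∣ m * s c := fun c _ => ⟨_, hcontent c⟩
      have hg : e ∣ Finset.univ.gcd (fun c => m * s c) := Finset.dvd_gcd this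
      rwa [Finset.gcd_mul_left, normalize_eq] at hg
    have he : e ∣ m := by
      have := Nat.dvd_gcd h1 h2
      rwa [Nat.gcd_mul_left, hcop, mul_one] at this
    refine ⟨he, ?_⟩
    apply Nat.eq_of_mul_eq_mul_left hepos
    calc e * p = m * k := hep
      _ = e * (m / e) * k := by rw [Nat.mul_div_cancel' he]
      _ = e * (m / e * k) := by ring
  have H1 : ∀ w ∈ F, m / (N / minP w) ∈ m.divisors := by
    intro w hw
    exact Nat.mem_divisors.mpr ⟨Nat.div_dvd_of_dvd (hediv w hw).1, hm.ne'⟩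
  rw [Finset.card_eq_sum_card_fiberwise H1]
  apply Finset.sum_congr rfl
  intro d hd
  rw [Nat.mem_divisors] at hd
  have hdpos : 0 < d := Nat.pos_of_dvd_of_pos hd.1 hm
  haveI : NeZero (d * k) := ⟨Nat.mul_ne_zero hdpos.ne' hk.ne'⟩
  have hdkN : d * k ∣ N := mul_dvd_mul_right hd.1 k
  have hNdk : N / (d * k) = m / d := Nat.mul_div_mul_right _ _ hk
  have hmd : m / d * d = m := Nat.div_mul_cancel hd.1
  have hmdpos : 0 < m / d := Nat.div_pos (Nat.le_of_dvd hm hd.1) hdpos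
  -- fiber over d consists of words with minP = d * k
  have hfib_eq : F.filter (fun w => m / (N / minP w) = d)
      = F.filter (fun w => minP w = d * k) := by
    apply Finset.filter_congr
    intro w hw
    obtain ⟨he, hp⟩ := hediv w hw
    constructor
    · intro h; rw [← h]; exact hp
    · intro h
      rw [h, hNdk] at hp
      have h3 : d = m / (m / d) := Nat.eq_of_mul_eq_mul_right hk hp
      rw [h, hNdk, ← h3]
  rw [hfib_eq, Bcard_eq]
  apply Finset.card_nbij' (i := fun w => resW hdkN w)
    (j := fun u => (extW u : Fin N → Fin a))
  · intro w hw
    rw [Finset.mem_coe, Finset.mem_filter] at hw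
    obtain ⟨hwF, hminP⟩ := hw
    rw [hFdef, Finset.mem_filter] at hwF
    have hper : IsPer (nw w) (d * k) := by rw [← hminP]; exact minP_isPer w
    have hnweq : nw (resW hdkN w) = nw w := nw_resW hdkN w hper
    simp only [Finset.mem_coe, Finset.mem_filter, Finset.mem_univ, true_and]
    constructor
    · rw [primitive_iff, minP_eq_of_nw_eq hnweq, hminP]
    · intro c
      have := content_eq_mul_res hdkN w hper c
      rw [hwF.2 c, hNdk] at this
      apply Nat.eq_of_mul_eq_mul_left hmdpos
      rw [← this, ← mul_assoc, hmd]
  · intro u hu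
    rw [Finset.mem_coe, Finset.mem_filter] at hu
    obtain ⟨-, hprim, hcont⟩ := hu
    have hnweq : nw (extW u : Fin N → Fin a) = nw u := nw_extW hdkN u
    have hminP : minP (extW u : Fin N → Fin a) = d * k := by
      rw [minP_eq_of_nw_eq hnweq]
      exact primitive_iff.mp hprim
    simp only [Finset.mem_coe, Finset.mem_filter]
    refine ⟨?_, hminP⟩
    rw [hFdef, Finset.mem_filter]
    refine ⟨Finset.mem_univ _, fun c => ?_⟩
    rw [content_extW hdkN u c, hcont c, hNdk, ← mul_assoc, hmd]
  · intro w hw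
    rw [Finset.mem_coe, Finset.mem_filter] at hw
    have hper : IsPer (nw w) (d * k) := by rw [← hw.2]; exact minP_isPer w
    exact extW_resW hdkN w hper
  · intro u _
    exact resW_extW hdkN u

end Decomp

section Orbit

variable {n : ℕ} [NeZero n]

lemma rot_injective {w : Fin n → Fin a} (h : Primitive n a w) :
    Function.Injective (fun d : Fin n => rot n a w d) := by
  intro d d' hdd
  simp only at hdd
  have h2 : rot n a (rot n a w d) (-d') = rot n a (rot n a w d') (-d') := by rw [hdd]
  rw [rot_rot, rot_rot] at h2
  have e2 : d' + -d' = (0 : Fin n) := by abel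
  rw [e2, rot_zero] at h2
  by_contra hne
  have hd0 : d + -d' ≠ 0 := by
    intro h0
    apply hne
    have : d = d' := by
      have := congrArg (fun x => x + d') h0
      simpa [add_assoc] using this
    exact this
  exact h _ hd0 h2

lemma card_orbits_mul (r : Fin a → ℕ) :
    (Nat.card {c : Quotient (rotSetoid n a) //
        ∃ w, Quotient.mk (rotSetoid n a) w = c ∧ Primitive n a w ∧
          ∀ i, content n a w i = r i}) * n
      = (Finset.univ.filter fun w : Fin n → Fin a =>
          Primitive n a w ∧ ∀ c, content n a w c = r c).card := by
  letI : Setoid (Fin n → Fin a) := rotSetoid n a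
  set F := Finset.univ.filter fun w : Fin n → Fin a =>
      Primitive n a w ∧ ∀ c, content n a w c = r c with hFdef
  set t := F.image (Quotient.mk (rotSetoid n a)) with htdef
  have hstep1 : Nat.card {c : Quotient (rotSetoid n a) //
      ∃ w, Quotient.mk (rotSetoid n a) w = c ∧ Primitive n a w ∧
        ∀ i, content n a w i = r i} = t.card := by
    rw [Nat.card_eq_fintype_card, Fintype.card_subtype]
    congr 1
    ext c
    simp only [Finset.mem_filter, Finset.mem_univ, true_and, htdef, Finset.mem_image, hFdef]
    tauto
  have hmem : ∀ w ∈ F, Quotient.mk (rotSetoid n a) w ∈ t :=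
    fun w hw => Finset.mem_image_of_mem _ hw
  have hsum := Finset.card_eq_sum_card_fiberwise hmem
  have hfib : ∀ c ∈ t, (F.filter fun w => Quotient.mk (rotSetoid n a) w = c).card = n := by
    intro c hc
    rw [htdef, Finset.mem_image] at hc
    obtain ⟨w₀, hw₀F, rfl⟩ := hc
    have hw₀ := Finset.mem_filter.mp hw₀F
    have himg : (F.filter fun w => Quotient.mk (rotSetoid n a) w = Quotient.mk (rotSetoid n a) w₀)
        = Finset.univ.image (fun d : Fin n => rot n a w₀ d) := by
      ext w
      constructor
      · intro hwmem
        rw [Finset.mem_filter] at hwmem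
        have hr2 : ∃ d, rot n a w₀ d = w := Setoid.symm (Quotient.exact hwmem.2)
        obtain ⟨d, hd⟩ := hr2
        exact hd ▸ Finset.mem_image_of_mem _ (Finset.mem_univ d)
      · intro hwmem
        obtain ⟨d, -, rfl⟩ := Finset.mem_image.mp hwmem
        rw [Finset.mem_filter]
        refine ⟨Finset.mem_filter.mpr ⟨Finset.mem_univ _, primitive_rot hw₀.2.1 d,
          fun c => by rw [content_rot]; exact hw₀.2.2 c⟩, ?_⟩
        have hrel : w₀ ≈ rot n a w₀ d := ⟨d, rfl⟩
        exact (Quotient.sound hrel).symm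
    rw [himg, Finset.card_image_of_injective _ (rot_injective hw₀.2.1), Finset.card_univ,
      Fintype.card_fin]
  rw [hstep1, hsum, Finset.sum_congr rfl hfib, Finset.sum_const, smul_eq_mul, mul_comm]

end Orbit

end Neck

attribute [local instance] Classical.propDecidable

/-- The number of primitive necklaces of length `n ≥ 1` on the alphabet `{1,…,a}`
in which letter `i` appears exactly `r i` times equals
`(1/n) ∑_{d | gcd(n,r₁,…,r_a)} μ(d) (n/d)! / ((r₁/d)! ⋯ (r_a/d)!)`. -/
theorem stmt1 (n a : ℕ) [NeZero n] (r : Fin a → ℕ) (hr : ∑ i, r i = n) :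
    (Nat.card {c : Quotient (rotSetoid n a) //
        ∃ w, Quotient.mk (rotSetoid n a) w = c ∧ Primitive n a w ∧
          ∀ i, content n a w i = r i} : ℚ) =
      (1 / n) * ∑ d ∈ (Nat.gcd n (Finset.univ.gcd r)).divisors,
        (ArithmeticFunction.moebius d : ℚ) * (Nat.factorial (n / d) : ℚ) /
          ∏ i, (Nat.factorial (r i / d) : ℚ) := by
  classical
  have hn : 0 < n := Nat.pos_of_ne_zero (NeZero.ne n)
  set g := Nat.gcd n (Finset.univ.gcd r) with hgdef
  have hgpos : 0 < g := Nat.gcd_pos_of_pos_left _ hn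
  have hgdvdn : g ∣ n := Nat.gcd_dvd_left _ _
  set k := n / g with hkdef
  have hgk : g * k = n := Nat.mul_div_cancel' hgdvdn
  have hkpos : 0 < k := Nat.div_pos (Nat.le_of_dvd hn hgdvdn) hgpos
  haveI : NeZero k := ⟨hkpos.ne'⟩
  haveI : NeZero g := ⟨hgpos.ne'⟩
  have hgr : ∀ c, g ∣ r c :=
    fun c => dvd_trans (Nat.gcd_dvd_right _ _) (Finset.gcd_dvd (Finset.mem_univ c))
  set s : Fin a → ℕ := fun c => r c / g with hsdef
  have hgs : ∀ c, g * s c = r c := fun c => Nat.mul_div_cancel' (hgr c)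
  have hssum : ∑ c, s c = k := by
    apply Nat.eq_of_mul_eq_mul_left hgpos
    rw [Finset.mul_sum]
    calc ∑ c, g * s c = ∑ c, r c := Finset.sum_congr rfl (fun c _ => hgs c)
      _ = n := hr
      _ = g * k := hgk.symm
  have hgcd_s : g * Finset.univ.gcd s = Finset.univ.gcd r := by
    have h0 : Finset.univ.gcd (fun c => g * s c) = Finset.univ.gcd r := by
      congr 1
      funext c
      exact hgs c
    rwa [Finset.gcd_mul_left, normalize_eq] at h0
  have hcop : Nat.Coprime k (Finset.univ.gcd s) := by
    have h1 : Nat.gcd (g * k) (g * Finset.univ.gcd s) = g * Nat.gcd k (Finset.univ.gcd s) :=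
      Nat.gcd_mul_left _ _ _
    rw [hgk, hgcd_s, ← hgdef] at h1
    have h2 : g * 1 = g * Nat.gcd k (Finset.univ.gcd s) := by rw [mul_one]; exact h1
    exact (Nat.eq_of_mul_eq_mul_left hgpos h2).symm
  set Bq : ℕ → ℚ := fun d => ((Neck.Bcard (d * k) (fun c => d * s c) : ℕ) : ℚ) with hBq
  set Aq : ℕ → ℚ := fun d => (((Finset.univ.filter fun w : Fin (d * k) → Fin a =>
      ∀ c, content (d * k) a w c = d * s c).card : ℕ) : ℚ) with hAq
  have hAB : ∀ d > 0, ∑ e ∈ d.divisors, Bq e = Aq d := by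
    intro d hd
    haveI : NeZero d := ⟨hd.ne'⟩
    simp only [hBq, hAq]
    rw [← Nat.cast_sum]
    norm_cast
    exact (Neck.card_decomp k d s hcop).symm
  have hmob := (ArithmeticFunction.sum_eq_iff_sum_smul_moebius_eq (f := Bq) (g := Aq)).mp
    hAB g hgpos
  rw [Nat.sum_divisorsAntidiagonal (f := fun x y => (ArithmeticFunction.moebius x) • Aq y)]
    at hmob
  -- hmob : ∑ d ∈ g.divisors, μ d • Aq (g / d) = Bq g
  have horb := Neck.card_orbits_mul (n := n) (a := a) r
  have hBn : Neck.Bcard n r = (Finset.univ.filter fun w : Fin n → Fin a =>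
      Primitive n a w ∧ ∀ c, content n a w c = r c).card := Neck.Bcard_eq n r
  have hBg : Bq g = ((Neck.Bcard n r : ℕ) : ℚ) := by
    simp only [hBq]
    congr 1
    rw [hgk]
    congr 1
    funext c
    exact hgs c
  have hterm : ∀ d ∈ g.divisors,
      (ArithmeticFunction.moebius d : ℚ) * (Nat.factorial (n / d) : ℚ) /
          ∏ i, (Nat.factorial (r i / d) : ℚ)
        = (ArithmeticFunction.moebius d) • Aq (g / d) := by
    intro d hd
    rw [Nat.mem_divisors] at hd
    obtain ⟨hdg, -⟩ := hd
    have hdpos : 0 < d := Nat.pos_of_dvd_of_pos hdg hgpos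
    have hdn : d ∣ n := hdg.trans hgdvdn
    have h1 : g / d * k = n / d := by
      apply Nat.eq_of_mul_eq_mul_left hdpos
      rw [← mul_assoc, Nat.mul_div_cancel' hdg, hgk, Nat.mul_div_cancel' hdn]
    have h2 : ∀ c, g / d * s c = r c / d := by
      intro c
      have hdr : d ∣ r c := hdg.trans (hgr c)
      apply Nat.eq_of_mul_eq_mul_left hdpos
      rw [← mul_assoc, Nat.mul_div_cancel' hdg, hgs c, Nat.mul_div_cancel' hdr]
    have hmult := Neck.card_content_mul (N := g / d * k) (s := fun c => g / d * s c)
      (by rw [← Finset.mul_sum, hssum])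
    have hApos : (0 : ℚ) < ∏ c, ((Nat.factorial (g / d * s c) : ℕ) : ℚ) :=
      Finset.prod_pos fun c _ => by exact_mod_cast Nat.factorial_pos _
    have hAval : Aq (g / d) = ((Nat.factorial (g / d * k) : ℕ) : ℚ)
        / ∏ c, ((Nat.factorial (g / d * s c) : ℕ) : ℚ) := by
      rw [eq_div_iff hApos.ne']
      simp only [hAq]
      rw [← Nat.cast_prod, ← Nat.cast_mul]
      exact_mod_cast hmult
    rw [hAval, h1, zsmul_eq_mul]
    have hprod : ∏ c, ((Nat.factorial (g / d * s c) : ℕ) : ℚ)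
        = ∏ i, ((Nat.factorial (r i / d) : ℕ) : ℚ) := by
      apply Finset.prod_congr rfl
      intro c _
      rw [h2 c]
    rw [hprod, mul_div_assoc]
  rw [Finset.sum_congr rfl hterm, hmob, hBg]
  have hcast : (Nat.card {c : Quotient (rotSetoid n a) //
      ∃ w, Quotient.mk (rotSetoid n a) w = c ∧ Primitive n a w ∧
        ∀ i, content n a w i = r i} : ℚ) * (n : ℚ) = ((Neck.Bcard n r : ℕ) : ℚ) := by
    rw [hBn]
    exact_mod_cast congrArg (fun x : ℕ => (x : ℚ)) horb
  rw [← hcast]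
  have hnQ : (n : ℚ) ≠ 0 := Nat.cast_ne_zero.mpr hn.ne'
  field_simp
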